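/- Let F be the standard Laplace cumulative distribution function, F(x) = 1/2 + (1/2) sgn(x) (1 − e^{−|x|}). Then for every threshold τ ≥ 0 and observation y ∈ ℝ, writing v = max(y, τ): twCRPS_τ(F, y) = v − τ + e^{−v} + (1/8) e^{−2τ} − e^{−τ}. -/

import Mathlib

open MeasureTheory Set

/-- Threshold-weighted CRPS: `twCRPS_τ(F, y) = ∫_τ^∞ (F(z) − 𝟙{z ≥ y})² dz`. -/
noncomputable def twCRPS (F : ℝ → ℝ) (τ y : ℝ) : ℝ :=
  ∫ z in Set.Ioi τ, (F z - if y ≤ z then (1 : ℝ) else 0) ^ 2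

/-- Standard Laplace CDF `F(x) = 1/2 + (1/2) sgn(x) (1 − e^{−|x|})`. -/
noncomputable def laplaceCDF (x : ℝ) : ℝ :=
  1 / 2 + 1 / 2 * Real.sign x * (1 - Real.exp (-|x|))

/-! On `(τ, ∞)` the observation indicator vanishes below `v = max y τ` (up to the null set `{y}`)
and equals `1` above it, so the score splits into `∫_τ^v F²` and `∫_v^∞ (1 - F)²`. For the Laplace
CDF with `τ ≥ 0` both pieces only see the branch `F z = 1 - e^{-z}/2`, and are elementary. -/

theorem twCRPS_eq_intervalIntegral_add_integral_Ioi (F : ℝ → ℝ) (τ y : ℝ)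
    (hlow : IntervalIntegrable (fun z => F z ^ 2) volume τ (max y τ))
    (hhigh : IntegrableOn (fun z => (1 - F z) ^ 2) (Ioi (max y τ))) :
    twCRPS F τ y =
      (∫ z in τ..max y τ, F z ^ 2) + ∫ z in Ioi (max y τ), (1 - F z) ^ 2 := by
  set v := max y τ
  set G : ℝ → ℝ := fun z => (F z - if y ≤ z then (1 : ℝ) else 0) ^ 2
  have hτv : τ ≤ v := le_max_right y τ
  have hlow_ae : G =ᵐ[volume.restrict (Ioc τ v)] fun z => F z ^ 2 := by
    have hne : ∀ᵐ z ∂(volume.restrict (Ioc τ v)), z ≠ y := Measure.ae_ne _ y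
    filter_upwards [ae_restrict_mem measurableSet_Ioc, hne] with z hz hzy
    have hzy' : ¬ y ≤ z := fun h =>
      hz.2.not_gt (max_lt (lt_of_le_of_ne h (Ne.symm hzy)) hz.1)
    simp only [G, if_neg hzy', sub_zero]
  have hhigh_eq : EqOn G (fun z => (1 - F z) ^ 2) (Ioi v) := fun z hz => by
    have hyz : y ≤ z := (le_max_left y τ).trans hz.le
    simp only [G, if_pos hyz]
    ring
  have hlow' : IntegrableOn G (Ioc τ v) :=
    ((intervalIntegrable_iff_integrableOn_Ioc_of_le hτv).1 hlow).congr hlow_ae.symm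
  have hhigh' : IntegrableOn G (Ioi v) := hhigh.congr_fun hhigh_eq.symm measurableSet_Ioi
  calc twCRPS F τ y = ∫ z in Ioc τ v ∪ Ioi v, G z := by rw [Ioc_union_Ioi_eq_Ioi hτv]; rfl
    _ = (∫ z in Ioc τ v, G z) + ∫ z in Ioi v, G z :=
      setIntegral_union (Ioc_disjoint_Ioi le_rfl) measurableSet_Ioi hlow' hhigh'
    _ = _ := by
      rw [intervalIntegral.integral_of_le hτv, integral_congr_ae hlow_ae,
        setIntegral_congr_fun measurableSet_Ioi hhigh_eq]

theorem laplaceCDF_of_nonneg {x : ℝ} (hx : 0 ≤ x) : laplaceCDF x = 1 - Real.exp (-x) / 2 := by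
  rcases hx.eq_or_lt with rfl | hpos
  · norm_num [laplaceCDF]
  · rw [laplaceCDF, Real.sign_of_pos hpos, abs_of_pos hpos]
    ring

theorem one_sub_laplaceCDF_sq_of_nonneg {x : ℝ} (hx : 0 ≤ x) :
    (1 - laplaceCDF x) ^ 2 = Real.exp (-2 * x) / 4 := by
  rw [laplaceCDF_of_nonneg hx, sub_sub_cancel, div_pow, sq, ← Real.exp_add]
  ring_nf

theorem hasDerivAt_laplaceCDF_sq_primitive {x : ℝ} (hx : 0 ≤ x) :
    HasDerivAt (fun z => z + Real.exp (-z) - Real.exp (-2 * z) / 8) (laplaceCDF x ^ 2) x := by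
  have hexp : HasDerivAt (fun z => Real.exp (-z)) (-Real.exp (-x)) x := by
    simpa using (hasDerivAt_neg x).exp
  have hexp2 : HasDerivAt (fun z => Real.exp (-2 * z)) (-2 * Real.exp (-2 * x)) x := by
    simpa [mul_comm] using ((hasDerivAt_id x).const_mul (-2)).exp
  refine (((hasDerivAt_id' x).add hexp).sub (hexp2.div_const 8)).congr_deriv ?_
  rw [laplaceCDF_of_nonneg hx, show -2 * x = (2 : ℕ) * -x by push_cast; ring, Real.exp_nat_mul]
  ring

theorem intervalIntegrable_laplaceCDF_sq {a b : ℝ} (ha : 0 ≤ a) (hb : 0 ≤ b) :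
    IntervalIntegrable (fun z => laplaceCDF z ^ 2) volume a b :=
  (intervalIntegrable_congr (g := fun z => (1 - Real.exp (-z) / 2) ^ 2) fun z hz => by
      simp only [laplaceCDF_of_nonneg ((le_min ha hb).trans hz.1.le)]).2
    ((by fun_prop : Continuous fun z => (1 - Real.exp (-z) / 2) ^ 2).intervalIntegrable _ _)

theorem integral_laplaceCDF_sq {a b : ℝ} (ha : 0 ≤ a) (hb : 0 ≤ b) :
    ∫ z in a..b, laplaceCDF z ^ 2 =
      (b + Real.exp (-b) - Real.exp (-2 * b) / 8) - (a + Real.exp (-a) - Real.exp (-2 * a) / 8) :=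
  intervalIntegral.integral_eq_sub_of_hasDerivAt
    (fun _ hx => hasDerivAt_laplaceCDF_sq_primitive ((le_min ha hb).trans hx.1))
    (intervalIntegrable_laplaceCDF_sq ha hb)

theorem integral_Ioi_one_sub_laplaceCDF_sq {a : ℝ} (ha : 0 ≤ a) :
    ∫ z in Ioi a, (1 - laplaceCDF z) ^ 2 = Real.exp (-2 * a) / 8 := by
  rw [setIntegral_congr_fun measurableSet_Ioi
    fun z hz => one_sub_laplaceCDF_sq_of_nonneg (ha.trans (le_of_lt hz)), integral_div,
    integral_exp_mul_Ioi (by norm_num)]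
  ring

theorem integrableOn_Ioi_one_sub_laplaceCDF_sq {a : ℝ} (ha : 0 ≤ a) :
    IntegrableOn (fun z => (1 - laplaceCDF z) ^ 2) (Ioi a) :=
  IntegrableOn.congr_fun ((integrableOn_exp_mul_Ioi (by norm_num : (-2 : ℝ) < 0) a).div_const 4)
    (fun z hz => (one_sub_laplaceCDF_sq_of_nonneg (ha.trans (le_of_lt hz))).symm)
    measurableSet_Ioi

theorem twCRPS_laplace_nonneg_threshold (τ y : ℝ) (hτ : 0 ≤ τ) :
    twCRPS laplaceCDF τ y =
      max y τ - τ + Real.exp (-(max y τ)) + 1 / 8 * Real.exp (-2 * τ)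
        - Real.exp (-τ) := by
  have hv : 0 ≤ max y τ := hτ.trans (le_max_right y τ)
  rw [twCRPS_eq_intervalIntegral_add_integral_Ioi _ _ _ (intervalIntegrable_laplaceCDF_sq hτ hv)
      (integrableOn_Ioi_one_sub_laplaceCDF_sq hv),
    integral_laplaceCDF_sq hτ hv, integral_Ioi_one_sub_laplaceCDF_sq hv]
  ring
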